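/- Conditional Kalikow-type decomposition. Assume sup_i ∑_j |W_{j→i}| < ∞, the uniform Lipschitz condition on φ with constant γ, φ_i(s,n) ≥ δ > 0 for all i, s, n, and G(n) < ∞ for every n. Fix ξ as in the context and fix (i,t) with ξ_t(i) = 0. Then λ_{(i,t)}(k) ∈ [0,1] for all k ≥ −1, ∑_{k≥−1} λ_{(i,t)}(k) = 1, and there exists a family of conditional probabilities (p_{(i,t)}^{[k]}(a|x))_{k≥0} satisfying: (1) for each a and k ≥ 0, the map S^ξ ∋ x ↦ p_{(i,t)}^{[k]}(a|x) depends only on the variables (x_s(j) : L_t^i(x) ≤ s ≤ t−1, j ∈ V_i(k)); (2) for all x ∈ S^ξ and k ≥ 0, p_{(i,t)}^{[k]}(1|x) ∈ [0,1] and p_{(i,t)}^{[k]}(0|x) + p_{(i,t)}^{[k]}(1|x) = 1; (3) for all x ∈ S^ξ and a ∈ {0,1}, p_{(i,t)}(a|x) = λ_{(i,t)}(−1)·p_{(i,t)}^{[−1]}(a) + ∑_{k≥0} λ_{(i,t)}(k)·p_{(i,t)}^{[k]}(a|x), where p_{(i,t)}^{[−1]}(a) = r_{(i,t)}^{[−1]}(a)/λ_{(i,t)}(−1).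 -/

import Mathlib

open MeasureTheory Filter Set
open scoped ENNReal

noncomputable section

namespace NeuronSys

variable {I : Type*}

/-- The accumulated, weighted spiking activity felt by neuron `i` at time `t`:
`∑_j W_{j→i} ∑_{s = L_t^i}^{t-1} g_j(t-s) x_s(j)`, where the inner sum ranges over
those `s < t` such that neuron `i` has no spike strictly between `s` and `t`
(equivalently `L_t^i(x) ≤ s ≤ t-1`; if `i` never spiked before `t`, over all `s < t`). -/
noncomputable def pot (W : I → I → ℝ) (g : I → ℕ → ℝ) (i : I) (t : ℤ)
    (x : ℤ → I → Bool) : ℝ :=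
  ∑' (j : I) (s : ℤ),
    if s < t ∧ (∀ u : ℤ, s < u → u < t → x u i = false) ∧ x s j = true
    then W j i * g j (t - s).toNat else 0

/-- The last spike time `L_t^i(x) = sup {s < t : x_s(i) = 1}` (junk value if no spike). -/
noncomputable def lastSpike (x : ℤ → I → Bool) (i : I) (t : ℤ) : ℤ :=
  sSup {s : ℤ | s < t ∧ x s i = true}

/-- The spiking probability of neuron `i` at time `t` given the past `x`, for a spiking
rate `φ_i(s, n)` depending also on the time `n = t - L_t^i` elapsed since the last spike. -/
noncomputable def spikeP (φ : I → ℝ → ℕ → ℝ) (W : I → I → ℝ) (g : I → ℕ → ℝ)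
    (i : I) (t : ℤ) (x : ℤ → I → Bool) : ℝ :=
  φ i (pot W g i t x) (t - lastSpike x i t).toNat

/-- The filtration `F_t = σ(X_s(j) : j ∈ I, s ≤ t)` on `{0,1}^{I × ℤ}`. -/
def filt (I : Type*) (t : ℤ) : MeasurableSpace (ℤ → I → Bool) :=
  MeasurableSpace.comap (fun x (p : {s : ℤ // s ≤ t} × I) => x p.1.1 p.2)
    MeasurableSpace.pi

/-- `P` is compatible with the dynamics: conditionally on `F_{t-1}` the coordinates
`(X_t(i))_{i∈I}` are independent, with `P(X_t(i) = 1 | F_{t-1}) = φ_i(potential, t - L_t^i)`. -/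
def Compatible (φ : I → ℝ → ℕ → ℝ) (W : I → I → ℝ) (g : I → ℕ → ℝ)
    (P : Measure (ℤ → I → Bool)) : Prop :=
  ∀ (t : ℤ) (J : Finset I) (a : I → Bool),
    (P[(fun x => ∏ i ∈ J, (if x t i = a i then (1:ℝ) else 0)) | filt I (t-1)])
      =ᵐ[P] (fun x => ∏ i ∈ J,
        (if a i then spikeP φ W g i t x else 1 - spikeP φ W g i t x))

/-- `G(n) = sup_i ∑_{m=1}^n g_i(m)`, as an extended real. -/
noncomputable def Gfun (g : I → ℕ → ℝ) (n : ℕ) : ℝ≥0∞ :=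
  ⨆ i : I, ∑ m ∈ Finset.Icc 1 n, ENNReal.ofReal (g i m)

end NeuronSys

namespace NeuronSys

variable {I : Type*}

/-- Spiking probability when the rate `φ_i(s)` does not depend on the elapsed time. -/
noncomputable def spikePS (φ : I → ℝ → ℝ) (W : I → I → ℝ) (g : I → ℕ → ℝ)
    (i : I) (t : ℤ) (x : ℤ → I → Bool) : ℝ :=
  φ i (pot W g i t x)

/-- Compatibility of `P` with the dynamics when `φ_i(s)` does not depend on
the elapsed time since the last spike. -/
def CompatibleS (φ : I → ℝ → ℝ) (W : I → I → ℝ) (g : I → ℕ → ℝ)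
    (P : Measure (ℤ → I → Bool)) : Prop :=
  ∀ (t : ℤ) (J : Finset I) (a : I → Bool),
    (P[(fun x => ∏ i ∈ J, (if x t i = a i then (1:ℝ) else 0)) | filt I (t-1)])
      =ᵐ[P] (fun x => ∏ i ∈ J,
        (if a i then spikePS φ W g i t x else 1 - spikePS φ W g i t x))

end NeuronSys

namespace NeuronSys

variable {I : Type*}

/-- The set `S^ξ` of configurations compatible with the spontaneous spikes `ξ`. -/
def Sxi (ξ : ℤ → I → Bool) : Set (ℤ → I → Bool) := {x | ∀ i t, ξ t i = true → x t i = true}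

/-- `R_t^i = sup {s < t : ξ_s(i) = 1}`, the last spontaneous spike time before `t`. -/
noncomputable def lastXi (ξ : ℤ → I → Bool) (i : I) (t : ℤ) : ℤ :=
  sSup {s : ℤ | s < t ∧ ξ s i = true}

/-- `p_{(i,t)}(a|x)`: probability that neuron `i` takes value `a` at time `t` given
the past configuration `x`. -/
noncomputable def pcond (φ : I → ℝ → ℕ → ℝ) (W : I → I → ℝ) (g : I → ℕ → ℝ)
    (i : I) (t : ℤ) (a : Bool) (x : ℤ → I → Bool) : ℝ :=
  if a then spikeP φ W g i t x else 1 - spikeP φ W g i t x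

/-- `r_{(i,t)}^{[-1]}(a) = inf {p_{(i,t)}(a|z) : z ∈ S^ξ}`. -/
noncomputable def rneg (φ : I → ℝ → ℕ → ℝ) (W : I → I → ℝ) (g : I → ℕ → ℝ)
    (ξ : ℤ → I → Bool) (i : I) (t : ℤ) (a : Bool) : ℝ :=
  sInf ((fun z => pcond φ W g i t a z) '' Sxi ξ)

/-- `r_{(i,t)}^{[k]}(a|x) = inf {p_{(i,t)}(a|z) : z ∈ S^ξ, z = x on V_i(k) × [L_t^i(x), t-1]}`. -/
noncomputable def rk (φ : I → ℝ → ℕ → ℝ) (W : I → I → ℝ) (g : I → ℕ → ℝ)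
    (ξ : ℤ → I → Bool) (V : I → ℕ → Finset I)
    (i : I) (t : ℤ) (k : ℕ) (a : Bool) (x : ℤ → I → Bool) : ℝ :=
  sInf {v | ∃ z ∈ Sxi ξ,
    (∀ j ∈ V i k, ∀ s : ℤ, lastSpike x i t ≤ s → s < t → z s j = x s j) ∧
    v = pcond φ W g i t a z}

/-- `λ_{(i,t)}(-1) = α_{(i,t)}(-1) = r^{[-1]}(1) + r^{[-1]}(0)`. -/
noncomputable def lamNeg (φ : I → ℝ → ℕ → ℝ) (W : I → I → ℝ) (g : I → ℕ → ℝ)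
    (ξ : ℤ → I → Bool) (i : I) (t : ℤ) : ℝ :=
  rneg φ W g ξ i t true + rneg φ W g ξ i t false

/-- `α_{(i,t)}(k) = inf_{x ∈ S^ξ} (r^{[k]}(1|x) + r^{[k]}(0|x))`. -/
noncomputable def alp (φ : I → ℝ → ℕ → ℝ) (W : I → I → ℝ) (g : I → ℕ → ℝ)
    (ξ : ℤ → I → Bool) (V : I → ℕ → Finset I) (i : I) (t : ℤ) (k : ℕ) : ℝ :=
  sInf ((fun x => rk φ W g ξ V i t k true x + rk φ W g ξ V i t k false x) '' Sxi ξ)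

/-- `λ_{(i,t)}(k) = α_{(i,t)}(k) - α_{(i,t)}(k-1)` for `k ≥ 0`. -/
noncomputable def lam (φ : I → ℝ → ℕ → ℝ) (W : I → I → ℝ) (g : I → ℕ → ℝ)
    (ξ : ℤ → I → Bool) (V : I → ℕ → Finset I) (i : I) (t : ℤ) : ℕ → ℝ
  | 0 => alp φ W g ξ V i t 0 - lamNeg φ W g ξ i t
  | k + 1 => alp φ W g ξ V i t (k + 1) - alp φ W g ξ V i t k

end NeuronSys


/-!
Write `r_k(a|x)` for `r^{[k]}_{(i,t)}(a|x)`. On `S^ξ` every window `[L_t^i(x), t)` starts at or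
after `R_t^i`, so two pasts that agree on `V_i(k)` inside the window have potentials within
`G(t - R_t^i) ∑_{j ∉ V_i(k)} |W_{j→i}|` of each other. By the Lipschitz bound this gives
`r_k(a|x) ≥ p(a|x) - ε_k` with `ε_k → 0`, hence `α(k) ↑ 1` and the `λ(k)` sum to one.

For a fixed `x` each weight `λ(k)` is split between the outcomes greedily: the mass given to `0`
by stage `k` is the largest one allowed by `λ(0), …, λ(k)` and the cap `r_k(0|x) - r_{-1}(0)`, and
`p^{[k]}(0|x)` is the share of `λ(k)` it takes. Since `α(k) ≤ r_k(1|x) + r_k(0|x)`, the mass left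
for `1` respects the cap `r_k(1|x) - r_{-1}(1)`; both caps are at most `p(a|x) - r_{-1}(a)`, which
add up to the total weight `1 - λ(-1)`, so the two masses converge to exactly these values. The
caps up to stage `k` only see the `V_i(k)`-coordinates inside the window, so `p^{[k]}` is local.
-/

namespace NeuronSys

open Finset
open scoped Topology

section GreedySplit

variable (c w : ℕ → ℝ)

/-- The mass drawn greedily from the first `k` weights `w 0, …, w (k - 1)`, one weight at a time,
without exceeding the cap `c l` after drawing from `w l`. -/
def greedyMass : ℕ → ℝ
  | 0 => 0
  | k + 1 => min (c k) (greedyMass k + w k)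

theorem greedyMass_succ_le (k : ℕ) : greedyMass c w (k + 1) ≤ c k :=
  min_le_left _ _

theorem greedyMass_succ_sub_le (k : ℕ) : greedyMass c w (k + 1) - greedyMass c w k ≤ w k :=
  sub_le_iff_le_add'.2 (min_le_right _ _)

theorem greedyMass_le_succ (hc₀ : 0 ≤ c 0) (hc : Monotone c) (hw : ∀ k, 0 ≤ w k) :
    ∀ k, greedyMass c w k ≤ greedyMass c w (k + 1)
  | 0 => le_min hc₀ (by simpa [greedyMass] using hw 0)
  | k + 1 =>
    le_min ((greedyMass_succ_le c w k).trans (hc k.le_succ)) (le_add_of_nonneg_right (hw _))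

theorem sum_range_sub_greedyMass_le (d : ℕ → ℝ) (hd₀ : 0 ≤ d 0) (hd : Monotone d)
    (hcd : ∀ k, ∑ l ∈ range (k + 1), w l ≤ c k + d k) :
    ∀ k, ∑ l ∈ range (k + 1), w l - greedyMass c w (k + 1) ≤ d k
  | 0 => by
    have := hcd 0
    rw [sum_range_one] at this ⊢
    rw [sub_le_comm, greedyMass, greedyMass, zero_add, le_min_iff]
    constructor <;> linarith
  | k + 1 => by
    have ih := sum_range_sub_greedyMass_le d hd₀ hd hcd k
    rw [sub_le_comm, greedyMass, le_min_iff]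
    have hsum := hcd (k + 1)
    have := hd k.le_succ
    rw [sum_range_succ _ (k + 1)] at hsum ⊢
    constructor <;> linarith

theorem tendsto_greedyMass (d : ℕ → ℝ) (hd₀ : 0 ≤ d 0) (hd : Monotone d)
    (hcd : ∀ k, ∑ l ∈ range (k + 1), w l ≤ c k + d k) {P₀ P₁ : ℝ}
    (hcP : ∀ k, c k ≤ P₀) (hdP : ∀ k, d k ≤ P₁) (hw : HasSum w (P₀ + P₁)) :
    Tendsto (greedyMass c w) atTop (𝓝 P₀) := by
  rw [← tendsto_add_atTop_iff_nat 1]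
  have hlower : Tendsto (fun k => ∑ l ∈ range (k + 1), w l - P₁) atTop (𝓝 P₀) := by
    simpa using (hw.tendsto_sum_nat.comp (tendsto_add_atTop_nat 1)).sub_const P₁
  refine tendsto_of_tendsto_of_tendsto_of_le_of_le hlower tendsto_const_nhds (fun k => ?_)
    (fun k => (greedyMass_succ_le c w k).trans (hcP k))
  dsimp only
  linarith [sum_range_sub_greedyMass_le c w d hd₀ hd hcd k, hdP k]

theorem hasSum_greedyMass_sub (hc₀ : 0 ≤ c 0) (hc : Monotone c) (hw₀ : ∀ k, 0 ≤ w k)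
    (d : ℕ → ℝ) (hd₀ : 0 ≤ d 0) (hd : Monotone d)
    (hcd : ∀ k, ∑ l ∈ range (k + 1), w l ≤ c k + d k) {P₀ P₁ : ℝ}
    (hcP : ∀ k, c k ≤ P₀) (hdP : ∀ k, d k ≤ P₁) (hw : HasSum w (P₀ + P₁)) :
    HasSum (fun k => greedyMass c w (k + 1) - greedyMass c w k) P₀ := by
  rw [hasSum_iff_tendsto_nat_of_nonneg
    (fun k => sub_nonneg.2 (greedyMass_le_succ c w hc₀ hc hw₀ k)),
    funext (sum_range_sub (greedyMass c w))]
  simpa only [greedyMass, sub_zero] using tendsto_greedyMass c w d hd₀ hd hcd hcP hdP hw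

theorem greedyMass_congr {c' : ℕ → ℝ} :
    ∀ {k}, (∀ l < k, c l = c' l) → greedyMass c w k = greedyMass c' w k
  | 0, _ => rfl
  | k + 1, h => by
    rw [greedyMass, greedyMass, h k k.lt_succ_self,
      greedyMass_congr fun l hl => h l (hl.trans k.lt_succ_self)]

end GreedySplit

/-- When `w = 0` this is the point mass at `true`, since `m / 0 = 0`. -/
def splitProb (m w : ℝ) : Bool → ℝ
  | true => 1 - m / w
  | false => m / w

theorem splitProb_mem_Icc {m w : ℝ} (hm : 0 ≤ m) (hmw : m ≤ w) :
    splitProb m w true ∈ Set.Icc 0 1 ∧ splitProb m w false + splitProb m w true = 1 := by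
  have h₀ : 0 ≤ m / w := div_nonneg hm (hm.trans hmw)
  have h₁ : m / w ≤ 1 := div_le_one_of_le₀ hmw (hm.trans hmw)
  exact ⟨⟨by simp [splitProb]; linarith, by simp [splitProb]; linarith⟩, by simp [splitProb]⟩

theorem mul_splitProb {m w : ℝ} (hm : 0 ≤ m) (hmw : m ≤ w) :
    w * splitProb m w false = m ∧ w * splitProb m w true = w - m := by
  have h : w * (m / w) = m := mul_div_cancel_of_imp' fun hw => le_antisymm (hw ▸ hmw) hm
  exact ⟨h, by rw [splitProb, mul_sub, mul_one, h]⟩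

theorem tendsto_tsum_indicator_compl {ι : Type*} {f : ι → ℝ} (hf : Summable f)
    {V : ℕ → Finset ι} (hV : Monotone V) (hcover : ∀ j, f j ≠ 0 → ∃ k, j ∈ V k) :
    Tendsto (fun k => ∑' j, (↑(V k) : Set ι)ᶜ.indicator f j) atTop (𝓝 0) := by
  have hpointwise : ∀ j, Tendsto (fun k => (↑(V k) : Set ι)ᶜ.indicator f j) atTop (𝓝 0) := by
    intro j
    by_cases hj : f j = 0
    · exact tendsto_const_nhds.congr fun k => (Set.indicator_apply_eq_zero.2 fun _ => hj).symm
    obtain ⟨K, hK⟩ := hcover j hj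
    refine tendsto_const_nhds.congr' (eventually_atTop.2 ⟨K, fun k hk => ?_⟩)
    simp [hV hk hK]
  simpa using tendsto_tsum_of_dominated_convergence hf.norm hpointwise
    (Eventually.of_forall fun k j => norm_indicator_le_norm_self f j)

section LastSpike

variable {I : Type*} {x y : ℤ → I → Bool} {i : I} {t s : ℤ}

theorem lastSpike_spec (h : ∃ s, s < t ∧ x s i = true) :
    lastSpike x i t < t ∧ x (lastSpike x i t) i = true :=
  Int.csSup_mem h ⟨t, fun _ hs => hs.1.le⟩

theorem le_lastSpike (hst : s < t) (hs : x s i = true) : s ≤ lastSpike x i t :=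
  le_csSup ⟨t, fun _ hs => hs.1.le⟩ ⟨hst, hs⟩

theorem eq_false_of_lastSpike_lt (hs : lastSpike x i t < s) (hst : s < t) : x s i = false := by
  by_contra h
  exact (le_lastSpike hst (Bool.not_eq_false _ ▸ h)).not_gt hs

theorem lastSpike_congr (hx : ∃ s, s < t ∧ x s i = true) (hy : ∃ s, s < t ∧ y s i = true)
    (h : ∀ s, lastSpike x i t ≤ s → s < t → y s i = x s i) :
    lastSpike y i t = lastSpike x i t := by
  obtain ⟨hxt, hx⟩ := lastSpike_spec hx
  obtain ⟨hyt, hy⟩ := lastSpike_spec hy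
  refine le_antisymm (le_of_not_gt fun hlt => ?_) (le_lastSpike hxt (h _ le_rfl hxt ▸ hx))
  exact (le_lastSpike hyt (h _ hlt.le hyt ▸ hy)).not_gt hlt

theorem exists_spike_of_mem_Sxi {ξ : ℤ → I → Bool} (hξ : ∃ s, s < t ∧ ξ s i = true)
    (hx : x ∈ Sxi ξ) : ∃ s, s < t ∧ x s i = true :=
  let ⟨s, hst, hs⟩ := hξ
  ⟨s, hst, hx i s hs⟩

theorem lastXi_le_lastSpike {ξ : ℤ → I → Bool} (hξ : ∃ s, s < t ∧ ξ s i = true)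
    (hx : x ∈ Sxi ξ) : lastXi ξ i t ≤ lastSpike x i t :=
  le_lastSpike (lastSpike_spec hξ).1 (hx i _ (lastSpike_spec hξ).2)

theorem Sxi_nonempty (ξ : ℤ → I → Bool) : (Sxi ξ).Nonempty :=
  ⟨fun _ _ => true, fun _ _ _ => rfl⟩

end LastSpike

section Potential

variable {I : Type*} (W : I → I → ℝ) (g : I → ℕ → ℝ) (i : I) (t : ℤ)

def windowSum (L : ℤ) (j : I) (x : ℤ → I → Bool) : ℝ :=
  ∑ s ∈ Finset.Icc L (t - 1), if x s j = true then W j i * g j (t - s).toNat else 0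

theorem pot_eq_tsum_windowSum {x : ℤ → I → Bool} (hx : ∃ s, s < t ∧ x s i = true) :
    pot W g i t x = ∑' j, windowSum W g i t (lastSpike x i t) j x := by
  obtain ⟨hLt, hL⟩ := lastSpike_spec hx
  have hwindow : ∀ s, (s < t ∧ ∀ u, s < u → u < t → x u i = false) ↔
      s ∈ Finset.Icc (lastSpike x i t) (t - 1) := by
    intro s
    rw [Finset.mem_Icc]
    constructor
    · rintro ⟨hst, hquiet⟩
      refine ⟨le_of_not_gt fun hsL => ?_, by omega⟩
      rw [hquiet _ hsL hLt] at hL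
      exact Bool.false_ne_true hL
    · rintro ⟨hLs, hst⟩
      exact ⟨by omega, fun u hsu hut => eq_false_of_lastSpike_lt (by omega) hut⟩
  refine tsum_congr fun j => ?_
  rw [tsum_eq_sum (s := Finset.Icc (lastSpike x i t) (t - 1)) fun s hs => ?_]
  · refine sum_congr rfl fun s hs => ?_
    simp only [← and_assoc, hwindow, hs, true_and]
  · rw [if_neg]
    rintro ⟨hst, hquiet, -⟩
    exact hs ((hwindow s).1 ⟨hst, hquiet⟩)

variable {W g i t}

theorem abs_windowSum_le (hg : ∀ j n, 0 ≤ g j n) (L : ℤ) (j : I) (x : ℤ → I → Bool) :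
    |windowSum W g i t L j x| ≤ |W j i| * ∑ s ∈ Finset.Icc L (t - 1), g j (t - s).toNat := by
  rw [mul_sum]
  refine (abs_sum_le_sum_abs _ _).trans (sum_le_sum fun s _ => ?_)
  split_ifs <;> simp [abs_mul, abs_of_nonneg (hg j _), mul_nonneg (abs_nonneg _) (hg j _)]

theorem abs_windowSum_sub_le (hg : ∀ j n, 0 ≤ g j n) (L : ℤ) (j : I) (x z : ℤ → I → Bool) :
    |windowSum W g i t L j z - windowSum W g i t L j x|
      ≤ |W j i| * ∑ s ∈ Finset.Icc L (t - 1), g j (t - s).toNat := by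
  rw [windowSum, windowSum, ← sum_sub_distrib, mul_sum]
  refine (abs_sum_le_sum_abs _ _).trans (sum_le_sum fun s _ => ?_)
  split_ifs <;> simp [abs_mul, abs_of_nonneg (hg j _), mul_nonneg (abs_nonneg _) (hg j _)]

theorem windowSum_congr {L : ℤ} {j : I} {x z : ℤ → I → Bool}
    (h : ∀ s, L ≤ s → s < t → z s j = x s j) :
    windowSum W g i t L j z = windowSum W g i t L j x :=
  sum_congr rfl fun s hs => by
    rw [Finset.mem_Icc] at hs
    rw [h s hs.1 (by omega)]

theorem sum_Icc_le_Gfun (hg : ∀ j n, 0 ≤ g j n) {N : ℕ} (hN : Gfun g N < ⊤) {L : ℤ}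
    (hL : t - L ≤ N) (j : I) :
    ∑ s ∈ Finset.Icc L (t - 1), g j (t - s).toNat ≤ (Gfun g N).toReal := by
  calc ∑ s ∈ Finset.Icc L (t - 1), g j (t - s).toNat
      = ∑ m ∈ (Finset.Icc L (t - 1)).image (fun s => (t - s).toNat), g j m := by
        rw [sum_image]
        intro s hs s' hs' h
        simp only [Finset.coe_Icc, Set.mem_Icc] at hs hs' h
        omega
    _ ≤ ∑ m ∈ Finset.Icc 1 N, g j m := by
        refine sum_le_sum_of_subset_of_nonneg (fun m hm => ?_) fun m _ _ => hg j m
        simp only [Finset.mem_image, Finset.mem_Icc] at hm ⊢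
        omega
    _ ≤ (Gfun g N).toReal := by
        rw [← ENNReal.toReal_ofReal (sum_nonneg fun m _ => hg j m),
          ENNReal.ofReal_sum_of_nonneg fun m _ => hg j m]
        exact ENNReal.toReal_mono hN.ne
          (le_iSup (fun j => ∑ m ∈ Finset.Icc 1 N, ENNReal.ofReal (g j m)) j)

theorem summable_abs_of_iSup_tsum_lt_top
    (hW : (⨆ i : I, ∑' j : I, ENNReal.ofReal |W j i|) < ⊤) (i : I) :
    Summable fun j => |W j i| :=
  (ENNReal.summable_toReal ((le_iSup (fun i => ∑' j, ENNReal.ofReal |W j i|) i).trans_lt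
    hW).ne).congr fun _ => ENNReal.toReal_ofReal (abs_nonneg _)

theorem abs_pot_sub_le (hg : ∀ j n, 0 ≤ g j n) {N : ℕ} (hN : Gfun g N < ⊤)
    (hW : Summable fun j => |W j i|) {J : Finset I} (hiJ : i ∈ J) {x z : ℤ → I → Bool}
    (hx : ∃ s, s < t ∧ x s i = true) (hz : ∃ s, s < t ∧ z s i = true)
    (hxN : t - lastSpike x i t ≤ N)
    (hzx : ∀ j ∈ J, ∀ s, lastSpike x i t ≤ s → s < t → z s j = x s j) :
    |pot W g i t z - pot W g i t x|
      ≤ (Gfun g N).toReal * ∑' j, (↑J : Set I)ᶜ.indicator (fun j => |W j i|) j := by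
  set C := (Gfun g N).toReal
  have hzL : lastSpike z i t = lastSpike x i t := lastSpike_congr hx hz (hzx i hiJ)
  have hsummable : ∀ y, Summable fun j => windowSum W g i t (lastSpike x i t) j y :=
    fun y => (hW.mul_right C).of_norm_bounded fun j =>
      (abs_windowSum_le hg _ j y).trans
        (mul_le_mul_of_nonneg_left (sum_Icc_le_Gfun hg hN hxN j) (abs_nonneg _))
  have hdiff : ∀ j, ‖windowSum W g i t (lastSpike x i t) j z
      - windowSum W g i t (lastSpike x i t) j x‖
      ≤ C * (↑J : Set I)ᶜ.indicator (fun j => |W j i|) j := by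
    intro j
    by_cases hj : j ∈ J
    · simp [hj, windowSum_congr (hzx j hj)]
    · rw [Set.indicator_of_mem (by simpa using hj), mul_comm, Real.norm_eq_abs]
      exact (abs_windowSum_sub_le hg _ j x z).trans
        (mul_le_mul_of_nonneg_left (sum_Icc_le_Gfun hg hN hxN j) (abs_nonneg _))
  rw [pot_eq_tsum_windowSum W g i t hx, pot_eq_tsum_windowSum W g i t hz, hzL,
    ← (hsummable z).tsum_sub (hsummable x), ← tsum_mul_left]
  exact tsum_of_norm_bounded ((hW.indicator _).mul_left C).hasSum hdiff

end Potential

section Decomposition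

variable {I : Type*} (φ : I → ℝ → ℕ → ℝ) (W : I → I → ℝ) (g : I → ℕ → ℝ)
  (ξ : ℤ → I → Bool) (V : I → ℕ → Finset I) (i : I) (t : ℤ)

theorem pcond_mem_Icc (hφ : ∀ i s n, φ i s n ∈ Set.Icc (0 : ℝ) 1) (a : Bool)
    (x : ℤ → I → Bool) : pcond φ W g i t a x ∈ Set.Icc 0 1 := by
  obtain ⟨h₀, h₁⟩ := hφ i (pot W g i t x) (t - lastSpike x i t).toNat
  cases a <;> simp only [pcond, spikeP, Set.mem_Icc] <;> constructor <;> simp <;> linarith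

theorem pcond_true_add_pcond_false (x : ℤ → I → Bool) :
    pcond φ W g i t true x + pcond φ W g i t false x = 1 := by
  simp [pcond]

theorem abs_pcond_sub_le {γ : ℝ} (hφ : ∀ i s s' n, |φ i s n - φ i s' n| ≤ γ * |s - s'|)
    {x z : ℤ → I → Bool} (hzx : lastSpike z i t = lastSpike x i t) (a : Bool) :
    |pcond φ W g i t a z - pcond φ W g i t a x| ≤ γ * |pot W g i t z - pot W g i t x| := by
  have h := hφ i (pot W g i t z) (pot W g i t x) (t - lastSpike x i t).toNat
  cases a
  · simpa [pcond, spikeP, hzx, abs_sub_comm] using h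
  · simpa [pcond, spikeP, hzx] using h

theorem rneg_nonneg (hφ : ∀ i s n, φ i s n ∈ Set.Icc (0 : ℝ) 1) (a : Bool) :
    0 ≤ rneg φ W g ξ i t a :=
  le_csInf ((Sxi_nonempty ξ).image _) (by
    rintro _ ⟨z, -, rfl⟩
    exact (pcond_mem_Icc φ W g i t hφ a z).1)

theorem rneg_le_rk (hφ : ∀ i s n, φ i s n ∈ Set.Icc (0 : ℝ) 1) {x : ℤ → I → Bool}
    (hx : x ∈ Sxi ξ) (k : ℕ) (a : Bool) : rneg φ W g ξ i t a ≤ rk φ W g ξ V i t k a x :=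
  csInf_le_csInf ⟨0, by rintro _ ⟨z, -, rfl⟩; exact (pcond_mem_Icc φ W g i t hφ a z).1⟩
    ⟨_, x, hx, fun _ _ _ _ _ => rfl, rfl⟩ (by rintro _ ⟨z, hz, -, rfl⟩; exact ⟨z, hz, rfl⟩)

theorem rk_le_pcond (hφ : ∀ i s n, φ i s n ∈ Set.Icc (0 : ℝ) 1) {x : ℤ → I → Bool}
    (hx : x ∈ Sxi ξ) (k : ℕ) (a : Bool) : rk φ W g ξ V i t k a x ≤ pcond φ W g i t a x :=
  csInf_le ⟨0, by rintro _ ⟨z, -, -, rfl⟩; exact (pcond_mem_Icc φ W g i t hφ a z).1⟩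
    ⟨x, hx, fun _ _ _ _ _ => rfl, rfl⟩

theorem rk_mono (hφ : ∀ i s n, φ i s n ∈ Set.Icc (0 : ℝ) 1) (hV : Monotone (V i))
    {x : ℤ → I → Bool} (hx : x ∈ Sxi ξ) (a : Bool) :
    Monotone fun k => rk φ W g ξ V i t k a x :=
  fun _ _ hkk => csInf_le_csInf
    ⟨0, by rintro _ ⟨z, -, -, rfl⟩; exact (pcond_mem_Icc φ W g i t hφ a z).1⟩
    ⟨_, x, hx, fun _ _ _ _ _ => rfl, rfl⟩
    (by rintro _ ⟨z, hz, hzx, rfl⟩; exact ⟨z, hz, fun j hj => hzx j (hV hkk hj), rfl⟩)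

theorem rk_sub_rneg_nonneg (hφ : ∀ i s n, φ i s n ∈ Set.Icc (0 : ℝ) 1) {x : ℤ → I → Bool}
    (hx : x ∈ Sxi ξ) (k : ℕ) (a : Bool) : 0 ≤ rk φ W g ξ V i t k a x - rneg φ W g ξ i t a :=
  sub_nonneg.2 (rneg_le_rk φ W g ξ V i t hφ hx k a)

theorem rk_sub_rneg_mono (hφ : ∀ i s n, φ i s n ∈ Set.Icc (0 : ℝ) 1) (hV : Monotone (V i))
    {x : ℤ → I → Bool} (hx : x ∈ Sxi ξ) (a : Bool) :
    Monotone fun k => rk φ W g ξ V i t k a x - rneg φ W g ξ i t a :=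
  fun _ _ hkk => sub_le_sub_right (rk_mono φ W g ξ V i t hφ hV hx a hkk) _

theorem pcond_sub_le_rk {x : ℤ → I → Bool} (hx : x ∈ Sxi ξ) (k : ℕ) (a : Bool) {ε : ℝ}
    (hε : ∀ z ∈ Sxi ξ, (∀ j ∈ V i k, ∀ s, lastSpike x i t ≤ s → s < t → z s j = x s j) →
      |pcond φ W g i t a z - pcond φ W g i t a x| ≤ ε) :
    pcond φ W g i t a x - ε ≤ rk φ W g ξ V i t k a x :=
  le_csInf ⟨_, x, hx, fun _ _ _ _ _ => rfl, rfl⟩ (by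
    rintro _ ⟨z, hz, hzx, rfl⟩
    linarith [(abs_le.1 (hε z hz hzx)).1])

theorem rk_congr (hξ : ∃ s, s < t ∧ ξ s i = true) (hV : Monotone (V i)) {k l : ℕ}
    (hiV : i ∈ V i k) (hlk : l ≤ k) {x y : ℤ → I → Bool} (hx : x ∈ Sxi ξ) (hy : y ∈ Sxi ξ)
    (hxy : ∀ j ∈ V i k, ∀ s, lastSpike x i t ≤ s → s < t → x s j = y s j) (a : Bool) :
    rk φ W g ξ V i t l a x = rk φ W g ξ V i t l a y := by
  have hL : lastSpike y i t = lastSpike x i t :=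
    lastSpike_congr (exists_spike_of_mem_Sxi hξ hx) (exists_spike_of_mem_Sxi hξ hy)
      fun s h₁ h₂ => (hxy i hiV s h₁ h₂).symm
  have hagree : ∀ z : ℤ → I → Bool,
      (∀ j ∈ V i l, ∀ s, lastSpike x i t ≤ s → s < t → z s j = x s j) ↔
        ∀ j ∈ V i l, ∀ s, lastSpike x i t ≤ s → s < t → z s j = y s j :=
    fun z => forall₂_congr fun j hj => forall₃_congr fun s h₁ h₂ => by
      rw [hxy j (hV hlk hj) s h₁ h₂]
  simp only [rk, hL, hagree]

theorem lamNeg_nonneg (hφ : ∀ i s n, φ i s n ∈ Set.Icc (0 : ℝ) 1) : 0 ≤ lamNeg φ W g ξ i t :=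
  add_nonneg (rneg_nonneg φ W g ξ i t hφ true) (rneg_nonneg φ W g ξ i t hφ false)

theorem lamNeg_mul_rneg_div (hφ : ∀ i s n, φ i s n ∈ Set.Icc (0 : ℝ) 1) (a : Bool) :
    lamNeg φ W g ξ i t * (rneg φ W g ξ i t a / lamNeg φ W g ξ i t) = rneg φ W g ξ i t a :=
  mul_div_cancel_of_imp' fun h => by
    have h₁ := rneg_nonneg φ W g ξ i t hφ true
    have h₂ := rneg_nonneg φ W g ξ i t hφ false
    rw [lamNeg] at h
    cases a <;> linarith

theorem alp_le_rk_add (hφ : ∀ i s n, φ i s n ∈ Set.Icc (0 : ℝ) 1) {x : ℤ → I → Bool}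
    (hx : x ∈ Sxi ξ) (k : ℕ) :
    alp φ W g ξ V i t k ≤ rk φ W g ξ V i t k true x + rk φ W g ξ V i t k false x :=
  csInf_le ⟨0, by
    rintro _ ⟨y, hy, rfl⟩
    exact add_nonneg ((rneg_nonneg φ W g ξ i t hφ _).trans (rneg_le_rk φ W g ξ V i t hφ hy k _))
      ((rneg_nonneg φ W g ξ i t hφ _).trans (rneg_le_rk φ W g ξ V i t hφ hy k _))⟩
    ⟨x, hx, rfl⟩

theorem lamNeg_le_alp (hφ : ∀ i s n, φ i s n ∈ Set.Icc (0 : ℝ) 1) (k : ℕ) :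
    lamNeg φ W g ξ i t ≤ alp φ W g ξ V i t k :=
  le_csInf ((Sxi_nonempty ξ).image _) (by
    rintro _ ⟨x, hx, rfl⟩
    exact add_le_add (rneg_le_rk φ W g ξ V i t hφ hx k _) (rneg_le_rk φ W g ξ V i t hφ hx k _))

theorem alp_le_one (hφ : ∀ i s n, φ i s n ∈ Set.Icc (0 : ℝ) 1) (k : ℕ) :
    alp φ W g ξ V i t k ≤ 1 := by
  obtain ⟨x, hx⟩ := Sxi_nonempty ξ
  linarith [alp_le_rk_add φ W g ξ V i t hφ hx k, rk_le_pcond φ W g ξ V i t hφ hx k true,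
    rk_le_pcond φ W g ξ V i t hφ hx k false, pcond_true_add_pcond_false φ W g i t x]

theorem alp_mono (hφ : ∀ i s n, φ i s n ∈ Set.Icc (0 : ℝ) 1) (hV : Monotone (V i)) :
    Monotone (alp φ W g ξ V i t) :=
  fun k _ hkk => le_csInf ((Sxi_nonempty ξ).image _) (by
    rintro _ ⟨x, hx, rfl⟩
    exact (alp_le_rk_add φ W g ξ V i t hφ hx k).trans
      (add_le_add (rk_mono φ W g ξ V i t hφ hV hx true hkk)
        (rk_mono φ W g ξ V i t hφ hV hx false hkk)))

theorem one_sub_two_mul_le_alp (k : ℕ) {ε : ℝ}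
    (hε : ∀ x ∈ Sxi ξ, ∀ a, pcond φ W g i t a x - ε ≤ rk φ W g ξ V i t k a x) :
    1 - 2 * ε ≤ alp φ W g ξ V i t k :=
  le_csInf ((Sxi_nonempty ξ).image _) (by
    rintro _ ⟨x, hx, rfl⟩
    linarith [hε x hx true, hε x hx false, pcond_true_add_pcond_false φ W g i t x])

theorem tendsto_alp_one (hφ : ∀ i s n, φ i s n ∈ Set.Icc (0 : ℝ) 1) {γ : ℝ} (hγ : 0 ≤ γ)
    (hφLip : ∀ i s s' n, |φ i s n - φ i s' n| ≤ γ * |s - s'|) (hg : ∀ j n, 0 ≤ g j n)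
    (hG : ∀ n, Gfun g n < ⊤) (hW : Summable fun j => |W j i|) (hV : Monotone (V i))
    (hiV : ∀ k, i ∈ V i k) (hcover : ∀ j, W j i ≠ 0 → ∃ k, j ∈ V i k)
    (hξ : ∃ s, s < t ∧ ξ s i = true) :
    Tendsto (alp φ W g ξ V i t) atTop (𝓝 1) := by
  set N := (t - lastXi ξ i t).toNat
  set ε : ℕ → ℝ := fun k =>
    γ * ((Gfun g N).toReal * ∑' j, (↑(V i k) : Set I)ᶜ.indicator (fun j => |W j i|) j)
  have htail := tendsto_tsum_indicator_compl hW hV fun j hj => hcover j (abs_ne_zero.1 hj)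
  have hε : Tendsto (fun k => 1 - 2 * ε k) atTop (𝓝 1) := by
    simpa [ε] using ((htail.const_mul _).const_mul γ).const_mul 2 |>.const_sub 1
  have hlower : ∀ k, 1 - 2 * ε k ≤ alp φ W g ξ V i t k := fun k =>
    one_sub_two_mul_le_alp φ W g ξ V i t k fun x hx a =>
      pcond_sub_le_rk φ W g ξ V i t hx k a fun z hz hzx => by
        have hxs := exists_spike_of_mem_Sxi hξ hx
        have hzs := exists_spike_of_mem_Sxi hξ hz
        have hxN : t - lastSpike x i t ≤ N := by
          linarith [lastXi_le_lastSpike hξ hx, Int.self_le_toNat (t - lastXi ξ i t)]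
        refine (abs_pcond_sub_le φ W g i t hφLip (lastSpike_congr hxs hzs
          fun s h₁ h₂ => hzx i (hiV k) s h₁ h₂) a).trans (mul_le_mul_of_nonneg_left ?_ hγ)
        exact abs_pot_sub_le hg (hG N) hW (hiV k) hxs hzs hxN hzx
  exact tendsto_of_tendsto_of_tendsto_of_le_of_le hε tendsto_const_nhds hlower
    (alp_le_one φ W g ξ V i t hφ)

theorem lam_nonneg (hφ : ∀ i s n, φ i s n ∈ Set.Icc (0 : ℝ) 1) (hV : Monotone (V i)) :
    ∀ k, 0 ≤ lam φ W g ξ V i t k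
  | 0 => sub_nonneg.2 (lamNeg_le_alp φ W g ξ V i t hφ 0)
  | k + 1 => sub_nonneg.2 (alp_mono φ W g ξ V i t hφ hV k.le_succ)

theorem sum_range_lam :
    ∀ k, ∑ l ∈ range (k + 1), lam φ W g ξ V i t l = alp φ W g ξ V i t k - lamNeg φ W g ξ i t
  | 0 => by simp [lam]
  | k + 1 => by rw [sum_range_succ, sum_range_lam k, lam]; ring

theorem hasSum_lam (hφ : ∀ i s n, φ i s n ∈ Set.Icc (0 : ℝ) 1) (hV : Monotone (V i))
    (hα : Tendsto (alp φ W g ξ V i t) atTop (𝓝 1)) :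
    HasSum (lam φ W g ξ V i t) (1 - lamNeg φ W g ξ i t) := by
  rw [hasSum_iff_tendsto_nat_of_nonneg (lam_nonneg φ W g ξ V i t hφ hV),
    ← tendsto_add_atTop_iff_nat 1]
  simpa only [sum_range_lam] using hα.sub_const _

def kalikowMass (x : ℤ → I → Bool) : ℕ → ℝ :=
  greedyMass (fun k => rk φ W g ξ V i t k false x - rneg φ W g ξ i t false) (lam φ W g ξ V i t)

def kalikowProb (k : ℕ) (a : Bool) (x : ℤ → I → Bool) : ℝ :=
  splitProb (kalikowMass φ W g ξ V i t x (k + 1) - kalikowMass φ W g ξ V i t x k)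
    (lam φ W g ξ V i t k) a

theorem kalikowMass_sub_mem_Icc (hφ : ∀ i s n, φ i s n ∈ Set.Icc (0 : ℝ) 1)
    (hV : Monotone (V i)) {x : ℤ → I → Bool} (hx : x ∈ Sxi ξ) (k : ℕ) :
    kalikowMass φ W g ξ V i t x (k + 1) - kalikowMass φ W g ξ V i t x k
      ∈ Set.Icc 0 (lam φ W g ξ V i t k) :=
  ⟨sub_nonneg.2 (greedyMass_le_succ _ _ (rk_sub_rneg_nonneg φ W g ξ V i t hφ hx 0 false)
      (rk_sub_rneg_mono φ W g ξ V i t hφ hV hx false) (lam_nonneg φ W g ξ V i t hφ hV) k),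
    greedyMass_succ_sub_le _ _ k⟩

theorem hasSum_kalikowMass_sub (hφ : ∀ i s n, φ i s n ∈ Set.Icc (0 : ℝ) 1)
    (hV : Monotone (V i)) (hlam : HasSum (lam φ W g ξ V i t) (1 - lamNeg φ W g ξ i t))
    {x : ℤ → I → Bool} (hx : x ∈ Sxi ξ) :
    HasSum (fun k => kalikowMass φ W g ξ V i t x (k + 1) - kalikowMass φ W g ξ V i t x k)
      (pcond φ W g i t false x - rneg φ W g ξ i t false) := by
  have hcaps : ∀ k, ∑ l ∈ range (k + 1), lam φ W g ξ V i t l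
      ≤ (rk φ W g ξ V i t k false x - rneg φ W g ξ i t false)
        + (rk φ W g ξ V i t k true x - rneg φ W g ξ i t true) := fun k => by
    rw [sum_range_lam]
    linarith [alp_le_rk_add φ W g ξ V i t hφ hx k, lamNeg.eq_1 φ W g ξ i t]
  have htotal : 1 - lamNeg φ W g ξ i t = (pcond φ W g i t false x - rneg φ W g ξ i t false)
      + (pcond φ W g i t true x - rneg φ W g ξ i t true) := by
    linarith [pcond_true_add_pcond_false φ W g i t x, lamNeg.eq_1 φ W g ξ i t]
  exact hasSum_greedyMass_sub _ _ (rk_sub_rneg_nonneg φ W g ξ V i t hφ hx 0 false)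
    (rk_sub_rneg_mono φ W g ξ V i t hφ hV hx false) (lam_nonneg φ W g ξ V i t hφ hV) _
    (rk_sub_rneg_nonneg φ W g ξ V i t hφ hx 0 true) (rk_sub_rneg_mono φ W g ξ V i t hφ hV hx true)
    hcaps (fun k => sub_le_sub_right (rk_le_pcond φ W g ξ V i t hφ hx k false) _)
    (fun k => sub_le_sub_right (rk_le_pcond φ W g ξ V i t hφ hx k true) _) (htotal ▸ hlam)

theorem hasSum_lam_mul_kalikowProb (hφ : ∀ i s n, φ i s n ∈ Set.Icc (0 : ℝ) 1)
    (hV : Monotone (V i)) (hlam : HasSum (lam φ W g ξ V i t) (1 - lamNeg φ W g ξ i t))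
    {x : ℤ → I → Bool} (hx : x ∈ Sxi ξ) (a : Bool) :
    HasSum (fun k => lam φ W g ξ V i t k * kalikowProb φ W g ξ V i t k a x)
      (pcond φ W g i t a x - rneg φ W g ξ i t a) := by
  have hm := hasSum_kalikowMass_sub φ W g ξ V i t hφ hV hlam hx
  have hsplit k := mul_splitProb (kalikowMass_sub_mem_Icc φ W g ξ V i t hφ hV hx k).1
    (kalikowMass_sub_mem_Icc φ W g ξ V i t hφ hV hx k).2
  cases a
  · simpa only [kalikowProb, hsplit] using hm
  · rw [show pcond φ W g i t true x - rneg φ W g ξ i t true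
        = 1 - lamNeg φ W g ξ i t - (pcond φ W g i t false x - rneg φ W g ξ i t false) by
      linarith [pcond_true_add_pcond_false φ W g i t x, lamNeg.eq_1 φ W g ξ i t]]
    simpa only [kalikowProb, hsplit] using hlam.sub hm

theorem kalikowProb_congr (hξ : ∃ s, s < t ∧ ξ s i = true) (hV : Monotone (V i))
    (hiV : ∀ k, i ∈ V i k) (k : ℕ) (a : Bool) {x y : ℤ → I → Bool} (hx : x ∈ Sxi ξ)
    (hy : y ∈ Sxi ξ) (hxy : ∀ j ∈ V i k, ∀ s, lastSpike x i t ≤ s → s < t → x s j = y s j) :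
    kalikowProb φ W g ξ V i t k a x = kalikowProb φ W g ξ V i t k a y := by
  have hcaps : ∀ {m}, m ≤ k + 1 →
      kalikowMass φ W g ξ V i t x m = kalikowMass φ W g ξ V i t y m :=
    fun hm => greedyMass_congr _ _ fun l hl => by
      rw [rk_congr φ W g ξ V i t hξ hV (hiV k) (by omega) hx hy hxy]
  rw [kalikowProb, kalikowProb, hcaps le_rfl, hcaps k.le_succ]

end Decomposition

end NeuronSys

open NeuronSys

theorem conditional_kalikow_decomposition_general
    {I : Type*}
    (W : I → I → ℝ) (g : I → ℕ → ℝ) (V : I → ℕ → Finset I)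
    (γ : ℝ) (φ : I → ℝ → ℕ → ℝ) (ξ : ℤ → I → Bool)
    (hgpos : ∀ j n, 0 ≤ g j n)
    (hγ : 0 < γ)
    (hWsum : (⨆ i : I, ∑' j : I, ENNReal.ofReal |W j i|) < ⊤)
    (hV0 : ∀ i, V i 0 = {i})
    (hVmono : ∀ i, Monotone (V i))
    (hVunion : ∀ i, (⋃ k, (V i k : Set I)) = {j | j ≠ i ∧ W j i ≠ 0} ∪ {i})
    (hφrange : ∀ i s n, φ i s n ∈ Set.Icc (0:ℝ) 1)
    (hφLip : ∀ i s s' n, |φ i s n - φ i s' n| ≤ γ * |s - s'|)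
    (hG : ∀ n, Gfun g n < ⊤)
    -- the environment has spontaneous spikes arbitrarily far in the past
    (hξ : ∀ (i : I) (t : ℤ), ∃ s : ℤ, s < t ∧ ξ s i = true)
    (i : I) (t : ℤ) :
    lamNeg φ W g ξ i t ∈ Set.Icc (0:ℝ) 1 ∧
    (∀ k : ℕ, lam φ W g ξ V i t k ∈ Set.Icc (0:ℝ) 1) ∧
    lamNeg φ W g ξ i t + ∑' k : ℕ, lam φ W g ξ V i t k = 1 ∧
    ∃ p : ℕ → Bool → (ℤ → I → Bool) → ℝ,
      -- (1) p^{[k]}(a|·) depends only on (x_s(j) : L_t^i(x) ≤ s ≤ t-1, j ∈ V_i(k))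
      (∀ (k : ℕ) (a : Bool), ∀ x ∈ Sxi ξ, ∀ y ∈ Sxi ξ,
        (∀ j ∈ V i k, ∀ s : ℤ, lastSpike x i t ≤ s → s < t → x s j = y s j) →
        p k a x = p k a y) ∧
      -- (2) p^{[k]}(·|x) is a probability on {0,1}
      (∀ (k : ℕ), ∀ x ∈ Sxi ξ,
        p k true x ∈ Set.Icc (0:ℝ) 1 ∧ p k false x + p k true x = 1) ∧
      -- (3) the convex decomposition of p_{(i,t)}(a|x)
      (∀ x ∈ Sxi ξ, ∀ a : Bool,
        pcond φ W g i t a x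
          = lamNeg φ W g ξ i t * (rneg φ W g ξ i t a / lamNeg φ W g ξ i t)
            + ∑' k : ℕ, lam φ W g ξ V i t k * p k a x) := by
  have hiV : ∀ k, i ∈ V i k := fun k => hVmono i k.zero_le (by simp [hV0])
  have hcover : ∀ j, W j i ≠ 0 → ∃ k, j ∈ V i k := fun j hj => by
    have hj : j ∈ ⋃ k, (V i k : Set I) := by
      rw [hVunion]
      by_cases hji : j = i
      · exact Or.inr hji
      · exact Or.inl ⟨hji, hj⟩
    simpa using hj
  have hlam := hasSum_lam φ W g ξ V i t hφrange (hVmono i)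
    (tendsto_alp_one φ W g ξ V i t hφrange hγ.le hφLip hgpos hG
      (summable_abs_of_iSup_tsum_lt_top hWsum i) (hVmono i) hiV hcover (hξ i t))
  have hlam_nonneg := lam_nonneg φ W g ξ V i t hφrange (hVmono i)
  have hmass {x} (hx : x ∈ Sxi ξ) := kalikowMass_sub_mem_Icc φ W g ξ V i t hφrange (hVmono i) hx
  refine ⟨⟨lamNeg_nonneg φ W g ξ i t hφrange, by linarith [hlam.nonneg hlam_nonneg]⟩,
    fun k => ⟨hlam_nonneg k, ?_⟩, by rw [hlam.tsum_eq]; ring, kalikowProb φ W g ξ V i t,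
    fun k a x hx y hy hxy => kalikowProb_congr φ W g ξ V i t (hξ i t) (hVmono i) hiV k a hx hy hxy,
    fun k x hx => splitProb_mem_Icc (hmass hx k).1 (hmass hx k).2, fun x hx a => ?_⟩
  · linarith [le_hasSum hlam k fun l _ => hlam_nonneg l, lamNeg_nonneg φ W g ξ i t hφrange]
  · rw [lamNeg_mul_rneg_div φ W g ξ i t hφrange,
      (hasSum_lam_mul_kalikowProb φ W g ξ V i t hφrange (hVmono i) hlam hx a).tsum_eq]
    ring

/-- **Proposition 1 (Conditional Kalikow-type decomposition in random environment).**
Fix an environment `ξ` of spontaneous spikes and `(i,t)` with `ξ_t(i) = 0`. Then the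
weights `λ_{(i,t)}(k)`, `k ≥ -1`, lie in `[0,1]` and sum to `1`, and there is a family of
conditional probabilities `(p^{[k]}_{(i,t)}(a|·))_{k≥0}` such that `p^{[k]}(a|x)` depends
only on `(x_s(j) : L_t^i(x) ≤ s ≤ t-1, j ∈ V_i(k))`, is a probability in `a`, and
`p_{(i,t)}(a|x) = λ(-1) p^{[-1]}(a) + ∑_{k≥0} λ(k) p^{[k]}(a|x)` on `S^ξ`, with
`p^{[-1]}(a) = r^{[-1]}(a)/λ(-1)`. -/
theorem conditional_kalikow_decomposition
    {I : Type*} [Countable I] [Nonempty I]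
    (W : I → I → ℝ) (g : I → ℕ → ℝ) (V : I → ℕ → Finset I)
    (γ δ : ℝ) (φ : I → ℝ → ℕ → ℝ) (ξ : ℤ → I → Bool)
    (hWdiag : ∀ j, W j j = 0)
    (hgpos : ∀ j n, 0 ≤ g j n)
    (hγ : 0 < γ) (hδ : 0 < δ)
    (hWsum : (⨆ i : I, ∑' j : I, ENNReal.ofReal |W j i|) < ⊤)
    (hV0 : ∀ i, V i 0 = {i})
    (hVmono : ∀ i, Monotone (V i))
    (hVunion : ∀ i, (⋃ k, (V i k : Set I)) = {j | j ≠ i ∧ W j i ≠ 0} ∪ {i})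
    (hφrange : ∀ i s n, φ i s n ∈ Set.Icc (0:ℝ) 1)
    (hφLip : ∀ i s s' n, |φ i s n - φ i s' n| ≤ γ * |s - s'|)
    (hφδ : ∀ i s n, δ ≤ φ i s n)
    (hG : ∀ n, Gfun g n < ⊤)
    -- the environment has spontaneous spikes arbitrarily far in the past
    (hξ : ∀ (i : I) (t : ℤ), ∃ s : ℤ, s < t ∧ ξ s i = true)
    (i : I) (t : ℤ) (hit : ξ t i = false) :
    lamNeg φ W g ξ i t ∈ Set.Icc (0:ℝ) 1 ∧
    (∀ k : ℕ, lam φ W g ξ V i t k ∈ Set.Icc (0:ℝ) 1) ∧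
    lamNeg φ W g ξ i t + ∑' k : ℕ, lam φ W g ξ V i t k = 1 ∧
    ∃ p : ℕ → Bool → (ℤ → I → Bool) → ℝ,
      -- (1) p^{[k]}(a|·) depends only on (x_s(j) : L_t^i(x) ≤ s ≤ t-1, j ∈ V_i(k))
      (∀ (k : ℕ) (a : Bool), ∀ x ∈ Sxi ξ, ∀ y ∈ Sxi ξ,
        (∀ j ∈ V i k, ∀ s : ℤ, lastSpike x i t ≤ s → s < t → x s j = y s j) →
        p k a x = p k a y) ∧
      -- (2) p^{[k]}(·|x) is a probability on {0,1}
      (∀ (k : ℕ), ∀ x ∈ Sxi ξ,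
        p k true x ∈ Set.Icc (0:ℝ) 1 ∧ p k false x + p k true x = 1) ∧
      -- (3) the convex decomposition of p_{(i,t)}(a|x)
      (∀ x ∈ Sxi ξ, ∀ a : Bool,
        pcond φ W g i t a x
          = lamNeg φ W g ξ i t * (rneg φ W g ξ i t a / lamNeg φ W g ξ i t)
            + ∑' k : ℕ, lam φ W g ξ V i t k * p k a x) :=
  conditional_kalikow_decomposition_general W g V γ φ ξ hgpos hγ hWsum hV0 hVmono hVunion hφrange
    hφLip hG hξ i t
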